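/- arXiv:math/0411166 — 2 statements merged into one kernel-verified Lean document; each statement's English description precedes it below -/
import Mathlib

section
/- The class of 1-counter languages is not closed under intersection: over the alphabet {a, b, c}, the languages D = { a^n b^n c^m : m, n ∈ ℕ } and E = { a^m b^n c^n : m, n ∈ ℕ } are both 1-counter, but D ∩ E = { a^n b^n c^n : n ∈ ℕ } is not 1-counter. -/
structure ZkAut (A : Type) (k : ℕ) where
  n : ℕ
  start : Fin n
  accept : Fin n → Prop
  edges : List (Fin n × (Option A × (Fin k → ℤ)) × Fin n)

inductive ZkAut.Path {A : Type} {k : ℕ} (M : ZkAut A k) :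
    Fin M.n → Fin M.n → List A → (Fin k → ℤ) → Prop
  | nil (q : Fin M.n) : ZkAut.Path M q q [] 0
  | cons {p q r : Fin M.n} {x : Option A} {g : Fin k → ℤ} {w : List A} {h : Fin k → ℤ} :
      (p, (x, g), q) ∈ M.edges → ZkAut.Path M q r w h →
      ZkAut.Path M p r (x.toList ++ w) (g + h)

def ZkAut.Accepts {A : Type} {k : ℕ} (M : ZkAut A k) (w : List A) : Prop :=
  ∃ q : Fin M.n, M.accept q ∧ M.Path M.start q w 0

def IsCounterLang {A : Type} (k : ℕ) (L : Language A) : Prop :=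
  ∃ M : ZkAut A k, ∀ w : List A, w ∈ L ↔ M.Accepts w

/-!
`D` and `E` are accepted by an automaton whose states remember the last letter read, so that it
reads exactly the sorted words, and which moves the counter by a fixed amount per letter.

For `a^n b^n c^n`, erase the loops of an accepting run: what remains is a path with fewer edges
than states, plus short cycles whose weights add up to minus the weight of that path. If a cycle
with nonempty label has weight zero, or two cycles have weights of opposite signs, suitable
powers of them can be inserted into the run with total weight zero. Otherwise all cycle weights
have one sign and those of cycles with nonempty label are nonzero, so the bounded total weight
of the cycles bounds the length of the word; hence long accepted words can be pumped.
A pumped block `u ^ t` with `t ≥ 2` inside a sorted word forces `u` to be a power of one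
letter, so pumping two blocks leaves some letter count unchanged while raising another, and
the word leaves `{a^n b^n c^n}`.
-/

lemma exists_zero_or_opposite_sign {ι : Type*} (l : List ι) (len : ι → ℕ) (W : ι → ℤ) {n D : ℕ}
    (hlen : ∀ i ∈ l, len i ≤ n) (hW : ∀ i ∈ l, |W i| ≤ D) (hsum : |(l.map W).sum| ≤ D)
    (hbig : n * D * D < (l.map len).sum) :
    ∃ i ∈ l, len i ≠ 0 ∧ (W i = 0 ∨ ∃ j ∈ l, W i * W j < 0) := by
  by_contra! h
  obtain ⟨i, hi, hleni⟩ : ∃ i ∈ l, len i ≠ 0 := by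
    by_contra! h0
    have : (l.map len).sum = 0 := List.sum_eq_zero (by simpa using h0)
    omega
  obtain ⟨hWi, hsign⟩ := h i hi hleni
  have hle : ∀ j ∈ l, (len j : ℤ) ≤ n * (W i * W j) := by
    intro j hj
    by_cases hj0 : len j = 0
    · simpa [hj0] using mul_nonneg (Nat.cast_nonneg n) (hsign j hj)
    · have h1 : 1 ≤ W i * W j := by
        have := mul_ne_zero hWi (h j hj hj0).1
        have := hsign j hj
        omega
      have := hlen j hj
      nlinarith
  have hsum_le : ((l.map len).sum : ℤ) ≤ n * (W i * (l.map W).sum) := by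
    rw [Nat.cast_list_sum, List.map_map, ← List.sum_map_mul_left, ← List.sum_map_mul_left]
    exact List.sum_le_sum hle
  have hprod : W i * (l.map W).sum ≤ D * D :=
    calc W i * (l.map W).sum ≤ |W i| * |(l.map W).sum| := by rw [← abs_mul]; exact le_abs_self _
      _ ≤ D * D := mul_le_mul (hW i hi) hsum (abs_nonneg _) (Nat.cast_nonneg D)
  have := mul_le_mul_of_nonneg_left hprod (Nat.cast_nonneg (α := ℤ) n)
  have : (n : ℤ) * D * D < ((l.map len).sum : ℕ) := by exact_mod_cast hbig
  linarith

lemma natAbs_smul_add_natAbs_smul_eq_zero {a b : ℤ} (h : a * b < 0) :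
    b.natAbs • a + a.natAbs • b = 0 := by
  simp only [nsmul_eq_mul, Int.natCast_natAbs]
  rcases le_or_gt 0 a with ha | ha <;> rcases le_or_gt 0 b with hb | hb
  · nlinarith
  · rw [abs_of_neg hb, abs_of_nonneg ha]; ring
  · rw [abs_of_nonneg hb, abs_of_neg ha]; ring
  · nlinarith

namespace ZkAut

variable {A : Type} {k : ℕ} (M : ZkAut A k)

abbrev Edge := Fin M.n × (Option A × (Fin k → ℤ)) × Fin M.n

def IsWalk : Fin M.n → Fin M.n → List M.Edge → Prop
  | p, q, [] => p = q
  | p, q, e :: L => e.1 = p ∧ e ∈ M.edges ∧ IsWalk e.2.2 q L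

def label (L : List M.Edge) : List A := L.flatMap fun e => e.2.1.1.toList

def weight (L : List M.Edge) : Fin k → ℤ := (L.map fun e => e.2.1.2).sum

def visited (p : Fin M.n) (L : List M.Edge) : List (Fin M.n) := p :: L.map fun e => e.2.2

variable {M}

@[simp] lemma label_nil : M.label [] = [] := rfl

@[simp] lemma label_cons (e : M.Edge) (L : List M.Edge) :
    M.label (e :: L) = e.2.1.1.toList ++ M.label L := rfl

@[simp] lemma label_append (L₁ L₂ : List M.Edge) :
    M.label (L₁ ++ L₂) = M.label L₁ ++ M.label L₂ :=
  List.flatMap_append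

lemma label_flatten (Ls : List (List M.Edge)) : M.label Ls.flatten = (Ls.map M.label).flatten := by
  induction Ls <;> simp_all

lemma length_label_le (L : List M.Edge) : (M.label L).length ≤ L.length := by
  induction L with
  | nil => simp
  | cons e L ih =>
      have := e.2.1.1.length_toList_le
      simp only [label_cons, List.length_append, List.length_cons]
      omega

lemma label_perm {L₁ L₂ : List M.Edge} (h : L₁.Perm L₂) : (M.label L₁).Perm (M.label L₂) :=
  h.flatMap_right _

lemma label_sublist {L₁ L₂ : List M.Edge} (h : L₁.Sublist L₂) :
    (M.label L₁).Sublist (M.label L₂) :=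
  h.flatMap _

@[simp] lemma weight_nil : M.weight [] = 0 := rfl

@[simp] lemma weight_cons (e : M.Edge) (L : List M.Edge) :
    M.weight (e :: L) = e.2.1.2 + M.weight L := List.sum_cons

@[simp] lemma weight_append (L₁ L₂ : List M.Edge) :
    M.weight (L₁ ++ L₂) = M.weight L₁ + M.weight L₂ := by
  simp [weight]

lemma weight_flatten (Ls : List (List M.Edge)) : M.weight Ls.flatten = (Ls.map M.weight).sum := by
  induction Ls <;> simp_all

lemma weight_eq_of_perm {L₁ L₂ : List M.Edge} (h : L₁.Perm L₂) : M.weight L₁ = M.weight L₂ :=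
  (h.map _).sum_eq

lemma visited_sublist {p : Fin M.n} {L₁ L₂ : List M.Edge} (h : L₁.Sublist L₂) :
    (M.visited p L₁).Sublist (M.visited p L₂) :=
  (h.map _).cons_cons p

lemma IsWalk.append {p q r : Fin M.n} {L₁ L₂ : List M.Edge} (h₁ : M.IsWalk p q L₁)
    (h₂ : M.IsWalk q r L₂) : M.IsWalk p r (L₁ ++ L₂) := by
  induction L₁ generalizing p with
  | nil => subst h₁; exact h₂
  | cons e L ih => exact ⟨h₁.1, h₁.2.1, ih h₁.2.2⟩

lemma IsWalk.flatten_replicate {r : Fin M.n} {C : List M.Edge} (h : M.IsWalk r r C) (t : ℕ) :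
    M.IsWalk r r (List.replicate t C).flatten := by
  induction t with
  | zero => rfl
  | succ t ih => simpa [List.replicate_succ] using h.append ih

theorem path_iff_exists_walk {p q : Fin M.n} {w : List A} {g : Fin k → ℤ} :
    M.Path p q w g ↔ ∃ L, M.IsWalk p q L ∧ M.label L = w ∧ M.weight L = g := by
  constructor
  · intro h
    induction h with
    | nil q => exact ⟨[], rfl, rfl, rfl⟩
    | cons he _ ih =>
        obtain ⟨L, hL, rfl, rfl⟩ := ih
        exact ⟨_ :: L, ⟨rfl, he, hL⟩, rfl, by simp⟩
  · rintro ⟨L, hL, rfl, rfl⟩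
    induction L generalizing p with
    | nil => subst hL; exact .nil p
    | cons e L ih =>
        obtain ⟨rfl, he, hL⟩ := hL
        exact .cons he (ih hL)

lemma IsWalk.exists_split {p q r : Fin M.n} {L : List M.Edge} (h : M.IsWalk p q L)
    (hr : r ∈ M.visited p L) :
    ∃ L₁ L₂, L = L₁ ++ L₂ ∧ M.IsWalk p r L₁ ∧ M.IsWalk r q L₂ ∧
      M.visited r L₂ <:+ M.visited p L := by
  induction L generalizing p with
  | nil =>
      obtain rfl : r = p := by simpa [visited] using hr
      exact ⟨[], [], rfl, rfl, h, List.suffix_refl _⟩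
  | cons e L ih =>
      obtain ⟨rfl, he, hL⟩ := h
      by_cases hre : r = e.1
      · subst hre
        exact ⟨[], e :: L, rfl, rfl, ⟨rfl, he, hL⟩, List.suffix_refl _⟩
      · have hr' : r ∈ M.visited e.2.2 L := by
          simpa [visited, hre] using hr
        obtain ⟨L₁, L₂, rfl, h₁, h₂, hsuf⟩ := ih hL hr'
        exact ⟨e :: L₁, L₂, rfl, ⟨rfl, he, h₁⟩, h₂, hsuf.trans (List.suffix_cons _ _)⟩

lemma IsWalk.exists_insert {p q r : Fin M.n} {L C : List M.Edge} (hL : M.IsWalk p q L)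
    (hr : r ∈ M.visited p L) (hC : M.IsWalk r r C) (t : ℕ) :
    ∃ L', M.IsWalk p q L' ∧ L'.Perm (L ++ (List.replicate t C).flatten) ∧ L.Sublist L' ∧
      (List.replicate t C).flatten.Sublist L' := by
  obtain ⟨L₁, L₂, rfl, h₁, h₂, -⟩ := hL.exists_split hr
  refine ⟨L₁ ++ (List.replicate t C).flatten ++ L₂, (h₁.append (hC.flatten_replicate t)).append h₂,
    ?_, ?_, ?_⟩
  · simpa only [List.append_assoc] using (List.perm_append_comm.append_left L₁)
  · exact (List.sublist_append_left _ _).append (List.Sublist.refl L₂)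
  · exact (List.sublist_append_right _ _).trans (List.sublist_append_left _ _)

theorem IsWalk.exists_loop_erasure {p q : Fin M.n} {L : List M.Edge} (h : M.IsWalk p q L) :
    ∃ (P : List M.Edge) (Cs : List (Fin M.n × List M.Edge)),
      M.IsWalk p q P ∧ (M.visited p P).Nodup ∧
      (∀ c ∈ Cs, c.1 ∈ M.visited p L ∧ M.IsWalk c.1 c.1 c.2 ∧ c.2.length ≤ M.n) ∧
      L.Perm (P ++ (Cs.map Prod.snd).flatten) := by
  induction L generalizing p with
  | nil => exact ⟨[], [], h, List.nodup_singleton p, by simp, by simp⟩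
  | cons e L ih =>
      obtain ⟨rfl, he, hL⟩ := h
      obtain ⟨P, Cs, hP, hnodup, hCs, hperm⟩ := ih hL
      have hCs' : ∀ c ∈ Cs, c.1 ∈ M.visited e.1 (e :: L) ∧ M.IsWalk c.1 c.1 c.2 ∧
          c.2.length ≤ M.n := fun c hc =>
        ⟨List.mem_cons_of_mem _ (hCs c hc).1, (hCs c hc).2⟩
      by_cases hloop : e.1 ∈ M.visited e.2.2 P
      · obtain ⟨P₁, P₂, rfl, hP₁, hP₂, hsuf⟩ := hP.exists_split hloop
        have hlen : (M.visited e.2.2 (P₁ ++ P₂)).length ≤ M.n := by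
          simpa using hnodup.length_le_card
        refine ⟨P₂, (e.1, e :: P₁) :: Cs, hP₂, hnodup.sublist hsuf.sublist, ?_, ?_⟩
        · simp only [List.mem_cons, forall_eq_or_imp]
          refine ⟨⟨List.mem_cons_self, ⟨rfl, he, hP₁⟩, ?_⟩, hCs'⟩
          simp only [visited, List.length_cons, List.length_map, List.length_append] at hlen ⊢
          omega
        · refine (hperm.cons e).trans ?_
          simpa only [List.map_cons, List.flatten_cons, List.append_assoc, List.cons_append]
            using (List.perm_append_comm (l₁ := e :: P₁) (l₂ := P₂)).append_right
              (Cs.map Prod.snd).flatten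
      · exact ⟨e :: P, Cs, ⟨rfl, he, hP⟩, List.nodup_cons.2 ⟨hloop, hnodup⟩, hCs', hperm.cons e⟩

lemma exists_abs_weight_le (M : ZkAut A k) (i : Fin k) :
    ∃ B : ℕ, ∀ e ∈ M.edges, |e.2.1.2 i| ≤ B := by
  refine ⟨(M.edges.map fun e => (e.2.1.2 i).natAbs).sum, fun e he => ?_⟩
  rw [Int.abs_eq_natAbs]
  exact_mod_cast List.le_sum_of_mem (List.mem_map_of_mem (f := fun e => (e.2.1.2 i).natAbs) he)

lemma IsWalk.abs_weight_le {p q : Fin M.n} {L : List M.Edge} {i : Fin k} {B : ℕ}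
    (hB : ∀ e ∈ M.edges, |e.2.1.2 i| ≤ B) (h : M.IsWalk p q L) :
    |M.weight L i| ≤ L.length * B := by
  induction L generalizing p with
  | nil => simp
  | cons e L ih =>
      obtain ⟨rfl, he, hL⟩ := h
      calc |M.weight (e :: L) i| ≤ |e.2.1.2 i| + |M.weight L i| := by simpa using abs_add_le _ _
        _ ≤ B + L.length * B := add_le_add (hB e he) (ih hL)
        _ = (e :: L).length * B := by rw [List.length_cons]; push_cast; ring

section OneCounter

variable {A : Type} {M : ZkAut A 1}

theorem IsWalk.exists_balanced_cycles {B : ℕ} (hB : ∀ e ∈ M.edges, |e.2.1.2 0| ≤ B)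
    {p q : Fin M.n} {L : List M.Edge} (hL : M.IsWalk p q L) (hwt : M.weight L = 0)
    (hlen : M.n + M.n * (M.n * B) * (M.n * B) < (M.label L).length) :
    ∃ (r₁ r₂ : Fin M.n) (C₁ C₂ : List M.Edge) (t₁ t₂ : ℕ),
      r₁ ∈ M.visited p L ∧ r₂ ∈ M.visited p L ∧ M.IsWalk r₁ r₁ C₁ ∧ M.IsWalk r₂ r₂ C₂ ∧
      M.label C₁ ≠ [] ∧ t₁ ≠ 0 ∧ t₂ ≠ 0 ∧ t₁ • M.weight C₁ + t₂ • M.weight C₂ = 0 := by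
  obtain ⟨P, Cs, hP, hnodup, hCs, hperm⟩ := hL.exists_loop_erasure
  have hPlen : P.length < M.n := by simpa [visited] using hnodup.length_le_card
  have hlabel : (M.label L).length =
      (M.label P).length + (Cs.map fun c => (M.label c.2).length).sum := by
    simp [(label_perm hperm).length_eq, label_flatten, List.length_flatten, Function.comp_def]
  have hweight : M.weight P 0 + (Cs.map fun c => M.weight c.2 0).sum = 0 := by
    have := congrFun (weight_eq_of_perm hperm) 0
    simpa [hwt, weight_flatten, Pi.list_sum_apply, Function.comp_def, eq_comm] using this
  have hshort {r s : Fin M.n} {C : List M.Edge} (hC : M.IsWalk r s C) (hlen : C.length ≤ M.n) :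
      |M.weight C 0| ≤ (M.n * B : ℕ) := by
    have := hC.abs_weight_le hB
    have : (C.length : ℤ) ≤ M.n := by exact_mod_cast hlen
    push_cast
    nlinarith
  obtain ⟨c₁, hc₁, hne, hsign⟩ := exists_zero_or_opposite_sign Cs (fun c => (M.label c.2).length)
    (fun c => M.weight c.2 0) (fun c hc => (length_label_le _).trans (hCs c hc).2.2)
    (fun c hc => hshort (hCs c hc).2.1 (hCs c hc).2.2)
    (by rw [show (Cs.map fun c => M.weight c.2 0).sum = -M.weight P 0 by linarith, abs_neg]
        exact hshort hP hPlen.le)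
    (by have := length_label_le (M := M) P; omega)
  have hC₁ : M.label c₁.2 ≠ [] := fun h => hne (by simp [h])
  obtain ⟨hr₁, hw₁, -⟩ := hCs c₁ hc₁
  rcases hsign with hzero | ⟨c₂, hc₂, hopp⟩
  · refine ⟨c₁.1, c₁.1, c₁.2, c₁.2, 1, 1, hr₁, hr₁, hw₁, hw₁, hC₁, one_ne_zero, one_ne_zero, ?_⟩
    funext x
    fin_cases x
    simp [hzero]
  · obtain ⟨hr₂, hw₂, -⟩ := hCs c₂ hc₂
    refine ⟨c₁.1, c₂.1, c₁.2, c₂.2, (M.weight c₂.2 0).natAbs, (M.weight c₁.2 0).natAbs,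
      hr₁, hr₂, hw₁, hw₂, hC₁, ?_, ?_, ?_⟩
    · exact Int.natAbs_ne_zero.2 (right_ne_zero_of_mul hopp.ne)
    · exact Int.natAbs_ne_zero.2 (left_ne_zero_of_mul hopp.ne)
    · funext x
      fin_cases x
      simpa using natAbs_smul_add_natAbs_smul_eq_zero hopp

theorem IsWalk.exists_pump {B : ℕ} (hB : ∀ e ∈ M.edges, |e.2.1.2 0| ≤ B)
    {p q : Fin M.n} {L : List M.Edge} (hL : M.IsWalk p q L) (hwt : M.weight L = 0)
    (hlen : M.n + M.n * (M.n * B) * (M.n * B) < (M.label L).length) :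
    ∃ (C₁ C₂ : List M.Edge) (t₁ t₂ : ℕ), M.label C₁ ≠ [] ∧ 2 ≤ t₁ ∧ 2 ≤ t₂ ∧
      ∃ L', M.IsWalk p q L' ∧ M.weight L' = 0 ∧
        L'.Perm (L ++ (List.replicate t₁ C₁).flatten ++ (List.replicate t₂ C₂).flatten) ∧
        (List.replicate t₁ C₁).flatten.Sublist L' ∧ (List.replicate t₂ C₂).flatten.Sublist L' := by
  obtain ⟨r₁, r₂, C₁, C₂, t₁, t₂, hr₁, hr₂, hC₁, hC₂, hne, ht₁, ht₂, hbal⟩ :=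
    hL.exists_balanced_cycles hB hwt hlen
  obtain ⟨L₁, hL₁, hperm₁, hsub₁, hC₁sub⟩ := hL.exists_insert hr₁ hC₁ (2 * t₁)
  obtain ⟨L₂, hL₂, hperm₂, hsub₂, hC₂sub⟩ :=
    hL₁.exists_insert ((visited_sublist hsub₁).subset hr₂) hC₂ (2 * t₂)
  have hperm : L₂.Perm (L ++ (List.replicate (2 * t₁) C₁).flatten ++
      (List.replicate (2 * t₂) C₂).flatten) := hperm₂.trans (hperm₁.append_right _)
  refine ⟨C₁, C₂, 2 * t₁, 2 * t₂, hne, by omega, by omega, L₂, hL₂, ?_, hperm,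
    hC₁sub.trans hsub₂, hC₂sub⟩
  rw [weight_eq_of_perm hperm]
  simp only [weight_append, weight_flatten, List.map_replicate, List.sum_replicate, hwt, mul_smul,
    ← smul_add, hbal, zero_add, smul_zero]

end OneCounter

end ZkAut

theorem IsCounterLang.exists_pump {A : Type} {L : Language A} (hL : IsCounterLang 1 L) :
    ∃ K : ℕ, ∀ w ∈ L, K < w.length → ∃ (u v : List A) (t₁ t₂ : ℕ), u ≠ [] ∧ 2 ≤ t₁ ∧ 2 ≤ t₂ ∧
      ∃ w' ∈ L, w'.Perm (w ++ (List.replicate t₁ u).flatten ++ (List.replicate t₂ v).flatten) ∧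
        (List.replicate t₁ u).flatten.Sublist w' ∧ (List.replicate t₂ v).flatten.Sublist w' := by
  obtain ⟨M, hM⟩ := hL
  obtain ⟨B, hB⟩ := M.exists_abs_weight_le 0
  refine ⟨M.n + M.n * (M.n * B) * (M.n * B), fun w hw hlen => ?_⟩
  obtain ⟨q, hq, hpath⟩ := (hM w).1 hw
  obtain ⟨L₀, hL₀, rfl, hwt⟩ := ZkAut.path_iff_exists_walk.1 hpath
  obtain ⟨C₁, C₂, t₁, t₂, hne, ht₁, ht₂, L', hL', hwt', hperm, hsub₁, hsub₂⟩ :=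
    hL₀.exists_pump hB hwt hlen
  have hlabel (t : ℕ) (C : List M.Edge) :
      M.label (List.replicate t C).flatten = (List.replicate t (M.label C)).flatten := by
    rw [ZkAut.label_flatten, List.map_replicate]
  refine ⟨M.label C₁, M.label C₂, t₁, t₂, hne, ht₁, ht₂, M.label L',
    (hM _).2 ⟨q, hq, ZkAut.path_iff_exists_walk.2 ⟨L', hL', rfl, hwt'⟩⟩, ?_, ?_, ?_⟩
  · simpa [hlabel] using ZkAut.label_perm hperm
  · simpa [hlabel] using ZkAut.label_sublist hsub₁
  · simpa [hlabel] using ZkAut.label_sublist hsub₂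

lemma List.append_self_sublist_flatten_replicate {α : Type*} (u : List α) {t : ℕ} (ht : 2 ≤ t) :
    (u ++ u).Sublist (List.replicate t u).flatten := by
  obtain ⟨s, rfl⟩ := Nat.exists_eq_add_of_le' ht
  simp [List.replicate_succ]

lemma List.SortedLE.card_toFinset_le_one_of_append_self_sublist {α : Type*} [PartialOrder α]
    [DecidableEq α] {l u : List α} (hl : l.SortedLE) (h : (u ++ u).Sublist l) :
    u.toFinset.card ≤ 1 := by
  have hle : ∀ x ∈ u, ∀ y ∈ u, x ≤ y := fun x hx y hy =>
    List.pairwise_pair.1 <| hl.pairwise.sublist <|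
      ((List.singleton_sublist.2 hx).append (List.singleton_sublist.2 hy)).trans h
  refine Finset.card_le_one.2 fun x hx y hy => ?_
  rw [List.mem_toFinset] at hx hy
  exact le_antisymm (hle x hx y hy) (hle y hy x hx)

def blocks (i j l : ℕ) : List (Fin 3) :=
  List.replicate i 0 ++ List.replicate j 1 ++ List.replicate l 2

lemma count_blocks (i j l : ℕ) (x : Fin 3) : (blocks i j l).count x = ![i, j, l] x := by
  fin_cases x <;> simp [blocks, List.count_replicate]

lemma count_blocks_self (n : ℕ) (x : Fin 3) : (blocks n n n).count x = n := by
  fin_cases x <;> simp [count_blocks]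

lemma blocks_inj {i j l i' j' l' : ℕ} :
    blocks i j l = blocks i' j' l' ↔ i = i' ∧ j = j' ∧ l = l' := by
  refine ⟨fun h => ?_, by rintro ⟨rfl, rfl, rfl⟩; rfl⟩
  have h' (x : Fin 3) := congrArg (List.count x) h
  simp only [count_blocks] at h'
  exact ⟨h' 0, h' 1, h' 2⟩

lemma sortedLE_blocks (i j l : ℕ) : (blocks i j l).SortedLE := by
  rw [List.sortedLE_iff_pairwise]
  simp [blocks, List.pairwise_append, List.pairwise_replicate, List.mem_replicate]

lemma sortedLE_iff_exists_blocks {w : List (Fin 3)} : w.SortedLE ↔ ∃ i j l, w = blocks i j l := by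
  refine ⟨fun hw => ⟨w.count 0, w.count 1, w.count 2, ?_⟩, ?_⟩
  · refine List.Perm.eq_of_sortedLE hw (sortedLE_blocks _ _ _) (List.perm_iff_count.2 fun x => ?_)
    fin_cases x <;> simp [count_blocks]
  · rintro ⟨i, j, l, rfl⟩
    exact sortedLE_blocks i j l

lemma sum_map_blocks (f : Fin 3 → ℤ) (i j l : ℕ) :
    ((blocks i j l).map f).sum = i * f 0 + j * f 1 + l * f 2 := by
  simp [blocks, List.sum_replicate]
  ring

def sortedAut (m : ℕ) (wt : Fin (m + 1) → ℤ) : ZkAut (Fin (m + 1)) 1 where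
  n := m + 1
  start := 0
  accept _ := True
  edges := ((List.finRange (m + 1) ×ˢ List.finRange (m + 1)).filter fun ab => ab.1 ≤ ab.2).map
    fun ab => (ab.1, (some ab.2, fun _ => wt ab.2), ab.2)

section sortedAut

variable {m : ℕ} {wt : Fin (m + 1) → ℤ}

lemma mem_sortedAut_edges {a b : Fin (m + 1)} {x : Option (Fin (m + 1))} {g : Fin 1 → ℤ} :
    (a, (x, g), b) ∈ (sortedAut m wt).edges ↔ a ≤ b ∧ x = some b ∧ g = fun _ => wt b := by
  unfold sortedAut
  simp [eq_comm]

lemma sortedAut_path {p q : Fin (sortedAut m wt).n} {w : List (Fin (m + 1))} {g : Fin 1 → ℤ}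
    (h : (sortedAut m wt).Path p q w g) : (p :: w).SortedLE ∧ g = fun _ => (w.map wt).sum := by
  induction h with
  | nil q => exact ⟨List.sortedLE_iff_isChain.2 (List.isChain_singleton q), rfl⟩
  | cons he _ ih =>
      obtain ⟨hab, rfl, rfl⟩ := mem_sortedAut_edges.1 he
      obtain ⟨hsorted, rfl⟩ := ih
      rw [List.sortedLE_iff_isChain] at hsorted ⊢
      exact ⟨List.isChain_cons_cons.2 ⟨hab, hsorted⟩, rfl⟩

lemma exists_sortedAut_path {p : Fin (m + 1)} {w : List (Fin (m + 1))} (h : (p :: w).SortedLE) :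
    ∃ q, (sortedAut m wt).Path p q w fun _ => (w.map wt).sum := by
  induction w generalizing p with
  | nil => exact ⟨p, by simpa [Pi.zero_def] using ZkAut.Path.nil (M := sortedAut m wt) p⟩
  | cons b w ih =>
      rw [List.sortedLE_iff_isChain, List.isChain_cons_cons] at h
      obtain ⟨q, hq⟩ := ih (List.sortedLE_iff_isChain.2 h.2)
      exact ⟨q, ZkAut.Path.cons (mem_sortedAut_edges.2 ⟨h.1, rfl, rfl⟩) hq⟩

theorem sortedAut_accepts_iff {w : List (Fin (m + 1))} :
    (sortedAut m wt).Accepts w ↔ w.SortedLE ∧ (w.map wt).sum = 0 := by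
  rw [List.sortedLE_iff_pairwise]
  constructor
  · rintro ⟨q, -, h⟩
    obtain ⟨hsorted, hg⟩ := sortedAut_path h
    exact ⟨(List.sortedLE_iff_pairwise.1 hsorted).of_cons, (congrFun hg 0).symm⟩
  · rintro ⟨hsorted, hsum⟩
    obtain ⟨q, hq⟩ := exists_sortedAut_path (wt := wt) (p := (sortedAut m wt).start)
      (List.sortedLE_iff_pairwise.2 (List.pairwise_cons.2 ⟨fun x _ => Fin.zero_le x, hsorted⟩))
    rw [hsum] at hq
    exact ⟨q, trivial, hq⟩

end sortedAut

lemma sortedAut_accepts_iff_blocks (wt : Fin 3 → ℤ) {w : List (Fin 3)} :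
    (sortedAut 2 wt).Accepts w ↔
      ∃ i j l, w = blocks i j l ∧ i * wt 0 + j * wt 1 + l * wt 2 = 0 := by
  rw [sortedAut_accepts_iff, sortedLE_iff_exists_blocks]
  constructor
  · rintro ⟨⟨i, j, l, rfl⟩, h⟩
    exact ⟨i, j, l, rfl, by rwa [sum_map_blocks] at h⟩
  · rintro ⟨i, j, l, rfl, h⟩
    exact ⟨⟨i, j, l, rfl⟩, by rwa [sum_map_blocks]⟩

theorem isCounterLang_one_anbncm :
    IsCounterLang 1 {w : List (Fin 3) | ∃ m n, w = blocks n n m} := by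
  refine ⟨sortedAut 2 ![1, -1, 0], fun w => ?_⟩
  rw [sortedAut_accepts_iff_blocks]
  constructor
  · rintro ⟨m, n, rfl⟩
    exact ⟨n, n, m, rfl, by simp⟩
  · rintro ⟨i, j, l, rfl, h⟩
    obtain rfl : j = i := by simp at h; omega
    exact ⟨l, j, rfl⟩

theorem isCounterLang_one_ambncn :
    IsCounterLang 1 {w : List (Fin 3) | ∃ m n, w = blocks m n n} := by
  refine ⟨sortedAut 2 ![0, 1, -1], fun w => ?_⟩
  rw [sortedAut_accepts_iff_blocks]
  constructor
  · rintro ⟨m, n, rfl⟩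
    exact ⟨m, n, n, rfl, by simp⟩
  · rintro ⟨i, j, l, rfl, h⟩
    obtain rfl : l = j := by simp at h; omega
    exact ⟨i, l, rfl⟩

lemma anbncm_inf_ambncn :
    ({w | ∃ m n, w = blocks n n m} ⊓ {w | ∃ m n, w = blocks m n n} : Language (Fin 3)) =
      {w | ∃ n, w = blocks n n n} := by
  ext w
  constructor
  · rintro ⟨⟨m, n, rfl⟩, ⟨m', n', h⟩⟩
    obtain ⟨-, h₂, h₃⟩ := blocks_inj.1 h
    exact ⟨n, by rw [h₃, ← h₂]⟩
  · rintro ⟨n, rfl⟩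
    exact ⟨⟨n, n, rfl⟩, ⟨n, n, rfl⟩⟩

theorem not_isCounterLang_one_anbncn :
    ¬ IsCounterLang 1 ({w | ∃ n, w = blocks n n n} : Language (Fin 3)) := by
  intro hL
  obtain ⟨K, hK⟩ := hL.exists_pump
  obtain ⟨u, v, t₁, t₂, hu, ht₁, ht₂, w', ⟨N, rfl⟩, hperm, hsub₁, hsub₂⟩ :=
    hK (blocks (K + 1) (K + 1) (K + 1)) ⟨K + 1, rfl⟩ (by simp [blocks]; omega)
  have hcount (x : Fin 3) : N = K + 1 + t₁ * u.count x + t₂ * v.count x := by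
    have := hperm.count_eq x
    simp only [List.count_append, count_blocks_self, List.count_flatten, List.map_replicate,
      List.sum_replicate, smul_eq_mul] at this
    omega
  -- `u` and `v` each repeat a single letter, so some letter `x` is not pumped at all
  have hcard : (u.toFinset ∪ v.toFinset).card < (Finset.univ : Finset (Fin 3)).card := by
    have hu₁ := (sortedLE_blocks N N N).card_toFinset_le_one_of_append_self_sublist
      ((u.append_self_sublist_flatten_replicate ht₁).trans hsub₁)
    have hv₁ := (sortedLE_blocks N N N).card_toFinset_le_one_of_append_self_sublist
      ((v.append_self_sublist_flatten_replicate ht₂).trans hsub₂)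
    have := Finset.card_union_le u.toFinset v.toFinset
    simp only [Finset.card_univ, Fintype.card_fin]
    omega
  obtain ⟨x, -, hx⟩ := Finset.exists_mem_notMem_of_card_lt_card hcard
  obtain ⟨y, hy⟩ := List.exists_mem_of_ne_nil u hu
  simp only [Finset.mem_union, List.mem_toFinset, not_or] at hx
  have hNK : N = K + 1 := by
    simpa [List.count_eq_zero.2 hx.1, List.count_eq_zero.2 hx.2] using hcount x
  have hy_count := List.count_pos_iff.2 hy
  have := hcount y
  nlinarith

/-- 1-counter languages are not closed under intersection: over `Fin 3`
(with `0 = a`, `1 = b`, `2 = c`), the languages `D = { a^n b^n c^m }` and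
`E = { a^m b^n c^n }` are 1-counter, but `D ⊓ E = { a^n b^n c^n }` is not. -/
theorem one_counter_not_closed_under_intersection :
    let D : Language (Fin 3) :=
      {w | ∃ m n : ℕ, w = List.replicate n 0 ++ List.replicate n 1 ++ List.replicate m 2}
    let E : Language (Fin 3) :=
      {w | ∃ m n : ℕ, w = List.replicate m 0 ++ List.replicate n 1 ++ List.replicate n 2}
    IsCounterLang 1 D ∧ IsCounterLang 1 E ∧
      D ⊓ E = {w | ∃ n : ℕ, w = List.replicate n 0 ++ List.replicate n 1 ++ List.replicate n 2} ∧
      ¬ IsCounterLang 1 (D ⊓ E) := by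
  intro D E
  have hDE : D ⊓ E = {w | ∃ n, w = blocks n n n} := anbncm_inf_ambncn
  exact ⟨isCounterLang_one_anbncm, isCounterLang_one_ambncn, hDE,
    hDE ▸ not_isCounterLang_one_anbncn⟩
end

section
/- The word problem of the free group of rank 2 is not a counter language: letting F₂ be the free group on generators a, b, the set of all words over the alphabet {a, a⁻¹, b, b⁻¹} that evaluate to the identity element of F₂ is not k-counter for any k ≥ 1. -/
/-- A letter of the alphabet {a, a⁻¹, b, b⁻¹} for the free group `F₂`:
`(i, false)` is the `i`-th generator, `(i, true)` its inverse. -/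
abbrev F2Letter : Type := Fin 2 × Bool

/-- Evaluation of a letter in the free group on two generators. -/
def evalF2Letter : F2Letter → FreeGroup (Fin 2)
  | (i, false) => FreeGroup.of i
  | (i, true) => (FreeGroup.of i)⁻¹

/-- Evaluation of a word over {a, a⁻¹, b, b⁻¹} in the free group `F₂`. -/
def evalF2Word (w : List F2Letter) : FreeGroup (Fin 2) :=
  (w.map evalF2Letter).prod

section BlockWord

variable {A : Type}

def blockWord (v : ℕ → List A) (i j : ℕ) : List A :=
  (List.range' i (j - i)).flatMap v

@[simp]
theorem blockWord_self (v : ℕ → List A) (i : ℕ) : blockWord v i i = [] := by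
  simp [blockWord]

theorem blockWord_succ (v : ℕ → List A) {i j : ℕ} (hij : i ≤ j) :
    blockWord v i (j + 1) = blockWord v i j ++ v j := by
  rw [blockWord, blockWord, Nat.sub_add_comm hij, List.range'_concat, List.flatMap_append]
  simp [Nat.add_sub_cancel' hij]

end BlockWord

namespace ZkAut

variable {A : Type} {k : ℕ} {M : ZkAut A k}

theorem Path.append {p q r : Fin M.n} {u w : List A} {g h : Fin k → ℤ}
    (hu : M.Path p q u g) (hw : M.Path q r w h) : M.Path p r (u ++ w) (g + h) := by
  induction hu with
  | nil => simpa using hw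
  | cons e _ ih => simpa [List.append_assoc, add_assoc] using Path.cons e (ih hw)

theorem Path.exists_of_append {p r : Fin M.n} {u w : List A} {g : Fin k → ℤ}
    (h : M.Path p r (u ++ w) g) :
    ∃ q g₁ g₂, g = g₁ + g₂ ∧ M.Path p q u g₁ ∧ M.Path q r w g₂ := by
  generalize hx : u ++ w = x at h
  induction h generalizing u with
  | nil q =>
    obtain ⟨rfl, rfl⟩ := List.append_eq_nil_iff.mp hx
    exact ⟨q, 0, 0, by simp, .nil q, .nil q⟩
  | @cons p q' r' c gc x' hx' e hp ih =>
    cases u with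
    | nil => exact ⟨p, 0, gc + hx', by simp, .nil p, by simpa [← hx] using Path.cons e hp⟩
    | cons a u =>
      cases c with
      | none =>
        obtain ⟨q, g₁, g₂, rfl, h₁, h₂⟩ := ih (u := a :: u) (by simpa using hx)
        exact ⟨q, gc + g₁, g₂, (add_assoc _ _ _).symm, by simpa using Path.cons e h₁, h₂⟩
      | some c =>
        obtain ⟨rfl, rfl⟩ : c = a ∧ x' = u ++ w := by simpa [eq_comm] using hx
        obtain ⟨q, g₁, g₂, rfl, h₁, h₂⟩ := ih rfl
        exact ⟨q, gc + g₁, g₂, (add_assoc _ _ _).symm, by simpa using Path.cons e h₁, h₂⟩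

theorem Path.exists_states_blockWord {v : ℕ → List A} {n : ℕ} {y : List A} {p r : Fin M.n}
    {g : Fin k → ℤ} (h : M.Path p r (blockWord v 0 n ++ y) g) :
    ∃ (q : ℕ → Fin M.n) (c : ℕ → Fin k → ℤ), q 0 = p ∧ c 0 = 0 ∧
      (∀ i < n, M.Path (q i) (q (i + 1)) (v i) (c (i + 1) - c i)) ∧
      M.Path (q n) r y (g - c n) := by
  induction n generalizing y with
  | zero => exact ⟨fun _ => p, fun _ => 0, rfl, rfl, by simp, by simpa using h⟩
  | succ n ih =>
    rw [blockWord_succ v (Nat.zero_le n), List.append_assoc] at h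
    obtain ⟨q, c, hq0, hc0, hstep, hlast⟩ := ih h
    obtain ⟨r', g₁, g₂, hg, h₁, h₂⟩ := hlast.exists_of_append
    refine ⟨Function.update q (n + 1) r', Function.update c (n + 1) (c n + g₁),
      by simp [hq0], by simp [hc0], fun i hi => ?_, ?_⟩
    · rcases Nat.lt_succ_iff_lt_or_eq.mp hi with hi | rfl
      · simpa [Function.update_of_ne (Nat.ne_of_lt (Nat.lt_succ_of_lt hi)),
          Function.update_of_ne (Nat.ne_of_lt (Nat.succ_lt_succ hi))] using hstep i hi
      · simpa [Function.update_of_ne (Nat.succ_ne_self i).symm] using h₁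
    · rw [Function.update_self, Function.update_self, sub_add_eq_sub_sub, hg, add_sub_cancel_left]
      exact h₂

theorem path_blockWord_of_steps {v : ℕ → List A} {n : ℕ} {q : ℕ → Fin M.n}
    {c : ℕ → Fin k → ℤ} (hstep : ∀ i < n, M.Path (q i) (q (i + 1)) (v i) (c (i + 1) - c i))
    {i j : ℕ} (hij : i ≤ j) (hjn : j ≤ n) :
    M.Path (q i) (q j) (blockWord v i j) (c j - c i) := by
  induction j, hij using Nat.le_induction with
  | base => simpa using Path.nil (q i)
  | succ j hij ih =>
    rw [blockWord_succ v hij]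
    simpa using (ih (by omega)).append (hstep j (by omega))

end ZkAut

theorem Fintype.exists_lt_lt_le_two_mul_card_eq {β : Type*} [Fintype β] (q : ℕ → β) :
    ∃ s t u, s < t ∧ t < u ∧ u ≤ 2 * Fintype.card β ∧ q s = q t ∧ q t = q u := by
  classical
  obtain ⟨y, -, hy⟩ := Finset.exists_lt_card_fiber_of_mul_lt_card_of_maps_to
    (s := Finset.range (2 * Fintype.card β + 1)) (t := Finset.univ) (n := 2) (f := q)
    (fun _ _ => Finset.mem_univ _) (by simp only [Finset.card_univ, Finset.card_range]; omega)
  set F := {x ∈ Finset.range (2 * Fintype.card β + 1) | q x = y}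
  let e := F.orderEmbOfFin rfl
  have he (i : Fin F.card) : e i ≤ 2 * Fintype.card β ∧ q (e i) = y := by
    have hmem : e i ∈ F := F.orderEmbOfFin_mem rfl i
    simp only [F, Finset.mem_filter, Finset.mem_range] at hmem
    exact ⟨by omega, hmem.2⟩
  refine ⟨e ⟨0, by omega⟩, e ⟨1, by omega⟩, e ⟨2, by omega⟩, e.strictMono (by simp),
    e.strictMono (by simp [Fin.lt_def]), (he _).1, ?_, ?_⟩ <;> simp only [(he _).2]

section CounterLanguage

variable {A : Type} {k : ℕ}

theorem IsCounterLang.exists_swap {L : Language A} (hL : IsCounterLang k L) :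
    ∃ n, ∀ (v : ℕ → List A) (y : List A), blockWord v 0 n ++ y ∈ L →
      ∃ s t u, s < t ∧ t < u ∧ u ≤ n ∧
        blockWord v 0 s ++ blockWord v t u ++ blockWord v s t ++ blockWord v u n ++ y ∈ L := by
  obtain ⟨M, hM⟩ := hL
  refine ⟨2 * M.n, fun v y hw => ?_⟩
  obtain ⟨f, hf, hpath⟩ := (hM _).mp hw
  obtain ⟨q, c, hq0, hc0, hstep, hlast⟩ := hpath.exists_states_blockWord
  obtain ⟨s, t, u, hst, htu, hun, hqst, hqtu⟩ := Fintype.exists_lt_lt_le_two_mul_card_eq q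
  rw [Fintype.card_fin] at hun
  have block {i j : ℕ} (hij : i ≤ j) (hjn : j ≤ 2 * M.n) :=
    ZkAut.path_blockWord_of_steps hstep hij hjn
  have pre := block (Nat.zero_le s) (by omega)
  have loop₁ := block hst.le (by omega)
  have loop₂ := block htu.le hun
  have suf := block hun le_rfl
  rw [hq0] at pre
  rw [hqst, hqtu] at loop₁
  rw [← hqst] at loop₂
  refine ⟨s, t, u, hst, htu, hun, (hM _).mpr ⟨f, hf, ?_⟩⟩
  convert (((pre.append loop₂).append loop₁).append suf).append hlast using 1
  rw [hc0]
  abel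

end CounterLanguage

section WordProblem

variable {A : Type} {k : ℕ} {G : Type*} [Group G] {ev : List A → G}

theorem eval_blockWord_of_telescoping (hev : ∀ u w, ev (u ++ w) = ev u * ev w)
    {g : ℕ → G} {v : ℕ → List A} (hv : ∀ i, ev (v i) = (g i)⁻¹ * g (i + 1)) {i j : ℕ}
    (hij : i ≤ j) : ev (blockWord v i j) = (g i)⁻¹ * g j := by
  induction j, hij using Nat.le_induction with
  | base => simpa using left_eq_mul.mp (hev [] [])
  | succ j hij ih =>
    rw [blockWord_succ v hij, hev, ih, hv]
    group

theorem IsCounterLang.exists_commute (hev : ∀ u w, ev (u ++ w) = ev u * ev w)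
    (hsurj : Function.Surjective ev) (hL : IsCounterLang k {w | ev w = 1}) :
    ∃ n, ∀ g : ℕ → G, ∃ s t u, s < t ∧ t < u ∧ u ≤ n ∧
      Commute ((g s)⁻¹ * g t) ((g t)⁻¹ * g u) := by
  obtain ⟨n, hn⟩ := hL.exists_swap
  refine ⟨n, fun g => ?_⟩
  choose v hv using fun i => hsurj ((g i)⁻¹ * g (i + 1))
  obtain ⟨y, hy⟩ := hsurj ((g n)⁻¹ * g 0)
  have block {i j : ℕ} (hij : i ≤ j) := eval_blockWord_of_telescoping hev hv hij
  obtain ⟨s, t, u, hst, htu, hun, hswap⟩ :=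
    hn v y (show ev _ = 1 by simp [hev, block (Nat.zero_le n), hy])
  refine ⟨s, t, u, hst, htu, hun, ?_⟩
  change ev _ = 1 at hswap
  simp only [hev, block (Nat.zero_le s), block hst.le, block htu.le,
    block hun, hy] at hswap
  calc (g s)⁻¹ * g t * ((g t)⁻¹ * g u) = (g s)⁻¹ * g 0 * 1 * ((g 0)⁻¹ * g u) := by group
    _ = (g t)⁻¹ * g u * ((g s)⁻¹ * g t) := by rw [← hswap]; group

end WordProblem

/-- The integer Heisenberg group; `⟨x, y, z⟩` stands for the matrix
`!![1, x, z; 0, 1, y; 0, 0, 1]`. -/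
@[ext]
structure Heisenberg where
  x : ℤ
  y : ℤ
  z : ℤ

namespace Heisenberg

instance : Mul Heisenberg := ⟨fun g h => ⟨g.x + h.x, g.y + h.y, g.z + h.z + g.x * h.y⟩⟩
instance : One Heisenberg := ⟨⟨0, 0, 0⟩⟩
instance : Inv Heisenberg := ⟨fun g => ⟨-g.x, -g.y, -g.z + g.x * g.y⟩⟩

@[simp] theorem mul_x (g h : Heisenberg) : (g * h).x = g.x + h.x := rfl
@[simp] theorem mul_y (g h : Heisenberg) : (g * h).y = g.y + h.y := rfl
@[simp] theorem mul_z (g h : Heisenberg) : (g * h).z = g.z + h.z + g.x * h.y := rfl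
@[simp] theorem one_x : (1 : Heisenberg).x = 0 := rfl
@[simp] theorem one_y : (1 : Heisenberg).y = 0 := rfl
@[simp] theorem one_z : (1 : Heisenberg).z = 0 := rfl
@[simp] theorem inv_x (g : Heisenberg) : g⁻¹.x = -g.x := rfl
@[simp] theorem inv_y (g : Heisenberg) : g⁻¹.y = -g.y := rfl
@[simp] theorem inv_z (g : Heisenberg) : g⁻¹.z = -g.z + g.x * g.y := rfl

instance : Group Heisenberg :=
  Group.ofLeftAxioms (fun _ _ _ => by ext <;> simp only [mul_x, mul_y, mul_z] <;> ring)
    (fun _ => by ext <;> simp) (fun _ => by ext <;> simp)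

@[simp] theorem pow_x (g : Heisenberg) (n : ℕ) : (g ^ n).x = n * g.x := by
  induction n with
  | zero => simp
  | succ n ih => rw [pow_succ, mul_x, ih]; push_cast; ring

@[simp] theorem pow_y (g : Heisenberg) (n : ℕ) : (g ^ n).y = n * g.y := by
  induction n with
  | zero => simp
  | succ n ih => rw [pow_succ, mul_y, ih]; push_cast; ring

theorem commute_iff {g h : Heisenberg} : Commute g h ↔ g.x * h.y = h.x * g.y := by
  refine ⟨fun hc => ?_, fun hc => ?_⟩
  · have := congrArg z hc.eq
    simp only [mul_z] at this
    linarith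
  · ext <;> simp only [mul_x, mul_y, mul_z] <;> linarith

end Heisenberg

section FreeGroupOfRankTwo

theorem evalF2Word_append (u w : List F2Letter) :
    evalF2Word (u ++ w) = evalF2Word u * evalF2Word w := by
  simp [evalF2Word]

theorem evalF2Word_surjective : Function.Surjective evalF2Word := by
  intro g
  induction g with
  | C1 => exact ⟨[], rfl⟩
  | of i => exact ⟨[(i, false)], by simp [evalF2Word, evalF2Letter]⟩
  | inv_of i _ => exact ⟨[(i, true)], by simp [evalF2Word, evalF2Letter]⟩
  | mul g h hg hh =>
    obtain ⟨u, rfl⟩ := hg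
    obtain ⟨w, rfl⟩ := hh
    exact ⟨u ++ w, evalF2Word_append u w⟩

def toHeisenberg : FreeGroup (Fin 2) →* Heisenberg :=
  FreeGroup.lift ![⟨1, 0, 0⟩, ⟨0, 1, 0⟩]

def parabolaElem (i : ℕ) : FreeGroup (Fin 2) :=
  FreeGroup.of 0 ^ i * FreeGroup.of 1 ^ (i ^ 2)

theorem toHeisenberg_parabolaElem (i : ℕ) :
    (toHeisenberg (parabolaElem i)).x = i ∧ (toHeisenberg (parabolaElem i)).y = i ^ 2 := by
  simp [toHeisenberg, parabolaElem, FreeGroup.lift_apply_of]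

theorem not_commute_parabolaElem {s t u : ℕ} (hst : s < t) (htu : t < u) :
    ¬ Commute ((parabolaElem s)⁻¹ * parabolaElem t) ((parabolaElem t)⁻¹ * parabolaElem u) := by
  intro hc
  have hdet := Heisenberg.commute_iff.mp (hc.map toHeisenberg)
  simp only [map_mul, map_inv, Heisenberg.mul_x, Heisenberg.mul_y, Heisenberg.inv_x,
    Heisenberg.inv_y, toHeisenberg_parabolaElem] at hdet
  have hst' : (0 : ℤ) < t - s := sub_pos.mpr (by exact_mod_cast hst)
  have htu' : (0 : ℤ) < u - t := sub_pos.mpr (by exact_mod_cast htu)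
  have hcollinear : ((t : ℤ) - s) * (u - t) * (u - s) = 0 := by linear_combination hdet
  exact (mul_pos (mul_pos hst' htu') (by omega)).ne' hcollinear

end FreeGroupOfRankTwo

/-- The word problem of the free group of rank 2 — the set of words over
{a, a⁻¹, b, b⁻¹} evaluating to the identity — is not `k`-counter for any
`k ≥ 1`. -/
theorem free_group_word_problem_not_counter :
    ∀ k : ℕ, 1 ≤ k →
      ¬ IsCounterLang k {w : List F2Letter | evalF2Word w = 1} := by
  intro k _ hL
  obtain ⟨n, hn⟩ := hL.exists_commute evalF2Word_append evalF2Word_surjective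
  obtain ⟨s, t, u, hst, htu, -, hc⟩ := hn parabolaElem
  exact not_commute_parabolaElem hst htu hc
end
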